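/- Let G be a nontrivial finitely generated solvable group. Then G is finitely annihilated if and only if the abelianisation G^ab is non-cyclic. -/

import Mathlib

/-!
If `Gᵃᵇ` is generated by the image of `g`, then for any proper normal subgroup `N ∋ g` the
abelianisation of `G ⧸ N` is trivial, which is impossible for a nontrivial solvable group.
Conversely, if `Gᵃᵇ` is finitely generated and not cyclic, then `Gᵃᵇ ⧸ ⟨g⟩` is a nontrivial
finitely generated abelian group; a maximal subgroup of it has simple, hence finite, quotient,
and its preimage in `G` is a proper normal finite-index subgroup containing `g`.
-/

/-- A group `G` is *finitely annihilated* if every element of `G` lies in some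
proper normal finite-index subgroup of `G`. -/
def FinitelyAnnihilated (G : Type*) [Group G] : Prop :=
  ∀ g : G, ∃ N : Subgroup G, N.Normal ∧ N ≠ ⊤ ∧ N.FiniteIndex ∧ g ∈ N

theorem IsSimpleModule.finite_of_hasFiniteQuotients {R M : Type*} [CommRing R]
    [Ring.HasFiniteQuotients R] (hR : ¬ IsField R) [AddCommGroup M] [Module R M]
    [IsSimpleModule R M] : Finite M := by
  have := IsSimpleModule.nontrivial R M
  have := Module.nontrivial R M
  obtain ⟨I, hI, ⟨e⟩⟩ := isSimpleModule_iff_quot_maximal.mp ‹IsSimpleModule R M›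
  have := Ring.HasFiniteQuotients.finiteQuotient (Ideal.bot_lt_of_maximal I hR).ne'
  exact .of_equiv _ e.symm.toEquiv

theorem CommGroup.exists_finiteIndex_ne_top (A : Type*) [CommGroup A] [Group.FG A]
    [Nontrivial A] : ∃ H : Subgroup A, H ≠ ⊤ ∧ H.FiniteIndex := by
  have : Module.Finite ℤ (Additive A) := Module.Finite.iff_addGroup_fg.mpr inferInstance
  obtain ⟨p, hp⟩ := IsCoatomic.exists_coatom (α := Submodule ℤ (Additive A))
  have : IsSimpleModule ℤ (Additive A ⧸ p) := isSimpleModule_iff_isCoatom.mpr hp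
  have : Finite (Additive A ⧸ p) := IsSimpleModule.finite_of_hasFiniteQuotients Int.not_isField
  have : p.toAddSubgroup.FiniteIndex :=
    @AddSubgroup.finiteIndex_of_finite_quotient _ _ _ (inferInstanceAs (Finite (Additive A ⧸ p)))
  refine ⟨Subgroup.toAddSubgroup.symm p.toAddSubgroup, fun h => hp.1 ?_, ⟨?_⟩⟩
  · simpa using congrArg Subgroup.toAddSubgroup h
  · rw [← Subgroup.index_toAddSubgroup]
    simpa using AddSubgroup.FiniteIndex.index_ne_zero

theorem Subgroup.comap_ne_top_of_surjective {G H : Type*} [Group G] [Group H] {f : G →* H}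
    (hf : Function.Surjective f) {N : Subgroup H} (hN : N ≠ ⊤) : N.comap f ≠ ⊤ := by
  rwa [← Subgroup.comap_top f, (Subgroup.comap_injective hf).ne_iff]

theorem Subgroup.finiteIndex_comap_of_surjective {G H : Type*} [Group G] [Group H] {f : G →* H}
    (hf : Function.Surjective f) (N : Subgroup H) [hN : N.FiniteIndex] :
    (N.comap f).FiniteIndex :=
  ⟨N.index_comap_of_surjective hf ▸ hN.index_ne_zero⟩

theorem FinitelyAnnihilated.of_surjective {G H : Type*} [Group G] [Group H] {f : G →* H}
    (hf : Function.Surjective f) (hH : FinitelyAnnihilated H) : FinitelyAnnihilated G := by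
  intro g
  obtain ⟨N, hN, hNtop, hNfin, hgN⟩ := hH (f g)
  exact ⟨N.comap f, hN.comap f, Subgroup.comap_ne_top_of_surjective hf hNtop,
    Subgroup.finiteIndex_comap_of_surjective hf N, hgN⟩

theorem CommGroup.finitelyAnnihilated_of_not_isCyclic {A : Type*} [CommGroup A] [Group.FG A]
    (hA : ¬ IsCyclic A) : FinitelyAnnihilated A := by
  intro a
  have hπ := QuotientGroup.mk'_surjective (Subgroup.zpowers a)
  have : Nontrivial (A ⧸ Subgroup.zpowers a) :=
    QuotientGroup.nontrivial_iff.mpr fun h => hA ⟨a, fun x => (h ▸ Subgroup.mem_top x :)⟩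
  have : Group.FG (A ⧸ Subgroup.zpowers a) := Group.fg_of_surjective hπ
  obtain ⟨H, hHtop, hHfin⟩ := CommGroup.exists_finiteIndex_ne_top (A ⧸ Subgroup.zpowers a)
  refine ⟨H.comap (QuotientGroup.mk' _), Subgroup.normal_of_isMulCommutative _,
    Subgroup.comap_ne_top_of_surjective hπ hHtop,
    Subgroup.finiteIndex_comap_of_surjective hπ H, ?_⟩
  simp [Subgroup.mem_comap, (QuotientGroup.eq_one_iff a).mpr (Subgroup.mem_zpowers a)]

theorem Abelianization.of_surjective (G : Type*) [Group G] :
    Function.Surjective (Abelianization.of : G →* Abelianization G) :=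
  QuotientGroup.mk'_surjective _

theorem Abelianization.map_surjective {G H : Type*} [Group G] [Group H] {f : G →* H}
    (hf : Function.Surjective f) : Function.Surjective (Abelianization.map f) :=
  Function.Surjective.of_comp (g := Abelianization.of) ((of_surjective H).comp hf)

instance Abelianization.nontrivial_of_isSolvable (G : Type*) [Group G] [Group.IsSolvable G]
    [Nontrivial G] : Nontrivial (Abelianization G) :=
  QuotientGroup.nontrivial_iff.mpr (Group.IsSolvable.commutator_lt_top_of_nontrivial G).ne

theorem FinitelyAnnihilated.not_isCyclic_abelianization {G : Type*} [Group G]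
    [Group.IsSolvable G] (hG : FinitelyAnnihilated G) : ¬ IsCyclic (Abelianization G) := by
  rintro ⟨x, hx⟩
  obtain ⟨g, rfl⟩ := Abelianization.of_surjective G x
  obtain ⟨N, hN, hNtop, -, hgN⟩ := hG g
  have : Nontrivial (G ⧸ N) := QuotientGroup.nontrivial_iff.mpr hNtop
  have hφ := Abelianization.map_surjective (QuotientGroup.mk'_surjective N)
  have hφg : Abelianization.map (QuotientGroup.mk' N) (.of g) = 1 := by
    simp [(QuotientGroup.eq_one_iff g).mpr hgN]
  have h_trivial (y : Abelianization (G ⧸ N)) : y = 1 := by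
    obtain ⟨z, rfl⟩ := hφ y
    obtain ⟨k, rfl⟩ := hx z
    rw [map_zpow, hφg, one_zpow]
  exact not_subsingleton _ ⟨fun y z => (h_trivial y).trans (h_trivial z).symm⟩

theorem solvable_finitelyAnnihilated_iff_abelianization_not_cyclic_general
    (G : Type*) [Group G] (hfg : Group.FG G) (hsolv : IsSolvable G) :
    FinitelyAnnihilated G ↔ ¬ IsCyclic (Abelianization G) := by
  have : Group.IsSolvable G := hsolv
  have : Group.FG (Abelianization G) := Group.fg_of_surjective (Abelianization.of_surjective G)
  exact ⟨FinitelyAnnihilated.not_isCyclic_abelianization, fun h =>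
    (CommGroup.finitelyAnnihilated_of_not_isCyclic h).of_surjective
      (Abelianization.of_surjective G)⟩

/-- A nontrivial finitely generated solvable group is finitely annihilated iff its
abelianisation is non-cyclic. -/
theorem solvable_finitelyAnnihilated_iff_abelianization_not_cyclic
    (G : Type*) [Group G] [Nontrivial G] (hfg : Group.FG G) (hsolv : IsSolvable G) :
    FinitelyAnnihilated G ↔ ¬ IsCyclic (Abelianization G) :=
  solvable_finitelyAnnihilated_iff_abelianization_not_cyclic_general G hfg hsolv
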